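/- For j = 1, 2, let μ_j ∈ M(𝕋^{d_j}), let Λ_j ⊂ ℤ^{d_j} be a finite subset, and let ν_j ∈ 𝓔(μ_j, Λ_j). Then ε(μ_1 × μ_2, Λ_1 × Λ_2) = ε(μ_1, Λ_1) · ε(μ_2, Λ_2), and the product measure ν_1 × ν_2 belongs to 𝓔(μ_1 × μ_2, Λ_1 × Λ_2). -/

import Mathlib

/- Setting: `M(𝕋^d)`, the space of complex bounded Radon measures on the `d`-dimensional
torus, is identified with the continuous dual of `C(𝕋^d, ℂ)` via the Riesz representation
theorem; the total variation norm corresponds to the operator norm. -/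

open MeasureTheory Complex Real

noncomputable section

attribute [local instance] ZeroLEOneClass.factZeroLtOne

/-- The `d`-dimensional torus `𝕋^d = (ℝ/ℤ)^d`. -/
abbrev Torus (d : ℕ) : Type := Fin d → AddCircle (1 : ℝ)

/-- The character `x ↦ e^{2πi m·x}` on the torus, for `m ∈ ℤ^d`. -/
def torusChar {d : ℕ} (m : Fin d → ℤ) : C(Torus d, ℂ) :=
  ⟨fun x => ∏ i, fourier (m i) (x i), by
    refine continuous_finsetProd _ fun i _ => ?_
    exact (map_continuous (fourier (m i))).comp (continuous_apply i)⟩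

/-- The space `M(𝕋^d)` of complex bounded Radon measures on the torus, identified (via the
Riesz representation theorem) with the continuous dual of `C(𝕋^d, ℂ)`; the total variation
norm is the operator norm. -/
abbrev TorusMeasure (d : ℕ) : Type := C(Torus d, ℂ) →L[ℂ] ℂ

/-- The Fourier coefficient `μ̂(m) = ∫_{𝕋^d} e^{-2πi m·x} dμ(x)`. -/
def mFourierCoeff {d : ℕ} (μ : TorusMeasure d) (m : Fin d → ℤ) : ℂ :=
  μ (torusChar (-m))

/-- `ν` is an extrapolation of `μ` from `Λ` if `ν̂ = μ̂` on `Λ`. -/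
def IsExtrapolation {d : ℕ} (μ : TorusMeasure d) (Λ : Finset (Fin d → ℤ))
    (ν : TorusMeasure d) : Prop :=
  ∀ m ∈ Λ, mFourierCoeff ν m = mFourierCoeff μ m

/-- `ε(μ,Λ) = inf {‖σ‖ : σ ∈ M(𝕋^d), σ̂ = μ̂ on Λ}`. -/
def minExtNorm {d : ℕ} (μ : TorusMeasure d) (Λ : Finset (Fin d → ℤ)) : ℝ :=
  sInf ((fun ν => ‖ν‖) '' {ν | IsExtrapolation μ Λ ν})

/-- `ν` is a minimal extrapolation of `μ` from `Λ`, i.e. `ν ∈ 𝓔(μ,Λ)`: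
an extrapolation whose total variation norm equals `ε(μ,Λ)`. -/
def IsMinimalExtrapolation {d : ℕ} (μ : TorusMeasure d) (Λ : Finset (Fin d → ℤ))
    (ν : TorusMeasure d) : Prop :=
  IsExtrapolation μ Λ ν ∧ ‖ν‖ = minExtNorm μ Λ

/-- `Γ(μ,Λ) = {m ∈ Λ : |μ̂(m)| = ε(μ,Λ)}`. -/
def gammaSet {d : ℕ} (μ : TorusMeasure d) (Λ : Finset (Fin d → ℤ)) : Set (Fin d → ℤ) :=
  {m | m ∈ Λ ∧ ‖mFourierCoeff μ m‖ = minExtNorm μ Λ}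

/-- The measure `ν` is supported in the set `S`: it annihilates every continuous
function vanishing on `S` (for closed `S` this says `supp(ν) ⊆ S`). -/
def SupportedIn {d : ℕ} (ν : TorusMeasure d) (S : Set (Torus d)) : Prop :=
  ∀ f : C(Torus d, ℂ), (∀ x ∈ S, f x = 0) → ν f = 0

/-- The pairing `⟨f,μ⟩ = ∫_{𝕋^d} f(x) conj(dμ(x)) = conj (μ (conj f))`. -/
def mPairing {d : ℕ} (f : C(Torus d, ℂ)) (μ : TorusMeasure d) : ℂ :=
  starRingEnd ℂ (μ (star f))

/-- `C(𝕋^d;Λ)`: the subspace of trigonometric polynomials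
`f(x) = ∑_{m ∈ Λ} a_m e^{2πi m·x}` with frequencies in `Λ`. -/
def trigPoly {d : ℕ} (Λ : Finset (Fin d → ℤ)) : Submodule ℂ C(Torus d, ℂ) :=
  Submodule.span ℂ (torusChar '' (Λ : Set (Fin d → ℤ)))

/-- For a continuous `g` with `‖g‖_∞ ≤ 1`, the assertion that `sign(ν) = g`
`ν`-almost everywhere, expressed through the standard equivalent condition
`⟨g,ν⟩ = ‖ν‖` (obtained by integrating the Radon–Nikodym identity
`∫ f d|ν| = ∫ f conj(sign ν) dν` against `f = conj g` and using `|ν|(𝕋^d) = ‖ν‖`). -/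
def SignEqAE {d : ℕ} (ν : TorusMeasure d) (g : C(Torus d, ℂ)) : Prop :=
  mPairing g ν = (‖ν‖ : ℂ)

/-- `ν` is a positive measure: it takes nonnegative real values on nonnegative real-valued
continuous functions. -/
def IsPositiveMeasure {d : ℕ} (ν : TorusMeasure d) : Prop :=
  ∀ f : C(Torus d, ℂ), (∀ x, (f x).im = 0 ∧ 0 ≤ (f x).re) → (ν f).im = 0 ∧ 0 ≤ (ν f).re

/-- The Dirac measure `δ_x`: evaluation at `x`. -/
def diracM {d : ℕ} (x : Torus d) : TorusMeasure d :=
  ContinuousMap.evalCLM ℂ x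

/-- The modulation `M_n ν`, defined by `d(M_n ν)(x) = e^{2πi n·x} dν(x)`. -/
def modulateM {d : ℕ} (n : Fin d → ℤ) (ν : TorusMeasure d) : TorusMeasure d :=
  ν.comp (ContinuousLinearMap.mul ℂ C(Torus d, ℂ) (torusChar n))

/-- Concatenation `𝕋^{d₁} × 𝕋^{d₂} → 𝕋^{d₁+d₂}` as a continuous map. -/
def torusAppend (d₁ d₂ : ℕ) : C(Torus d₁ × Torus d₂, Torus (d₁ + d₂)) :=
  ⟨fun p => Fin.append p.1 p.2, by
    refine continuous_pi fun i => ?_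
    refine Fin.addCases (motive := fun i => Continuous fun p : Torus d₁ × Torus d₂ =>
      Fin.append p.1 p.2 i) (fun j => ?_) (fun j => ?_) i
    · simp only [Fin.append_left]
      exact (continuous_apply j).comp continuous_fst
    · simp only [Fin.append_right]
      exact (continuous_apply j).comp continuous_snd⟩

/-- The product measure `μ₁ × μ₂ ∈ M(𝕋^{d₁+d₂})`, defined on the dual side by
`(μ₁ × μ₂)(f) = μ₁ (x ↦ μ₂ (y ↦ f(x,y)))`. It satisfies
`(μ₁ × μ₂)^(m₁,m₂) = μ̂₁(m₁) μ̂₂(m₂)` and `‖μ₁ × μ₂‖ = ‖μ₁‖ ‖μ₂‖`. -/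
def prodM {d₁ d₂ : ℕ} (μ₁ : TorusMeasure d₁) (μ₂ : TorusMeasure d₂) :
    TorusMeasure (d₁ + d₂) :=
  LinearMap.mkContinuous
    { toFun := fun f => μ₁ ((⟨⇑μ₂, μ₂.continuous⟩ : C(C(Torus d₂, ℂ), ℂ)).comp
        ((f.comp (torusAppend d₁ d₂)).curry))
      map_add' := fun f g => by
        have h : ((f + g).comp (torusAppend d₁ d₂)).curry =
            (f.comp (torusAppend d₁ d₂)).curry + (g.comp (torusAppend d₁ d₂)).curry := by
          ext x y
          rfl
        show μ₁ _ = μ₁ _ + μ₁ _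
        rw [h, ← map_add μ₁]
        congr 1
        ext x
        exact map_add μ₂ _ _
      map_smul' := fun c f => by
        have h : ((c • f).comp (torusAppend d₁ d₂)).curry =
            c • (f.comp (torusAppend d₁ d₂)).curry := by
          ext x y
          rfl
        simp only [RingHom.id_apply]
        show μ₁ _ = c • μ₁ _
        rw [h, ← _root_.map_smul μ₁]
        congr 1
        ext x
        exact _root_.map_smul μ₂ _ _ }
    (‖μ₁‖ * ‖μ₂‖) (fun f => by
      simp only [LinearMap.coe_mk, AddHom.coe_mk]
      have h2 : ∀ x : Torus d₁, ‖((f.comp (torusAppend d₁ d₂)).curry) x‖ ≤ ‖f‖ :=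
        fun x => (ContinuousMap.norm_le _ (norm_nonneg f)).mpr fun y =>
          f.norm_coe_le_norm _
      have h1 : ‖(⟨⇑μ₂, μ₂.continuous⟩ : C(C(Torus d₂, ℂ), ℂ)).comp
          ((f.comp (torusAppend d₁ d₂)).curry)‖ ≤ ‖μ₂‖ * ‖f‖ := by
        refine (ContinuousMap.norm_le _ (by positivity)).mpr fun x => ?_
        calc ‖μ₂ (((f.comp (torusAppend d₁ d₂)).curry) x)‖
            ≤ ‖μ₂‖ * ‖((f.comp (torusAppend d₁ d₂)).curry) x‖ := μ₂.le_opNorm _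
          _ ≤ ‖μ₂‖ * ‖f‖ := mul_le_mul_of_nonneg_left (h2 x) (norm_nonneg μ₂)
      calc ‖μ₁ _‖ ≤ ‖μ₁‖ * ‖(⟨⇑μ₂, μ₂.continuous⟩ : C(C(Torus d₂, ℂ), ℂ)).comp
            ((f.comp (torusAppend d₁ d₂)).curry)‖ := μ₁.le_opNorm _
        _ ≤ ‖μ₁‖ * (‖μ₂‖ * ‖f‖) := mul_le_mul_of_nonneg_left h1 (norm_nonneg μ₁)
        _ = ‖μ₁‖ * ‖μ₂‖ * ‖f‖ := by ring)

/-!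
The product `ν₁ × ν₂` extrapolates `μ₁ × μ₂` from `Λ₁ × Λ₂` and has norm at most
`‖ν₁‖ ‖ν₂‖ = ε(μ₁,Λ₁) ε(μ₂,Λ₂)`, which gives one inequality. For the other, Hahn–Banach
identifies `ε(μ,Λ)` with the norm of `μ` restricted to the trigonometric polynomials with
frequencies in `-Λ`. The tensor product `f₁ ⊗ f₂` of two such polynomials is one for
`Λ₁ × Λ₂`, its sup norm is at most `‖f₁‖ ‖f₂‖`, and `(μ₁ × μ₂)(f₁ ⊗ f₂) = μ₁(f₁) μ₂(f₂)`;
so the norm of the restriction of `μ₁ × μ₂` is at least the product of the two others.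
-/

section Extensions

variable {𝕜 E : Type*} [RCLike 𝕜] [SeminormedAddCommGroup E] [NormedSpace 𝕜 E]

def minExtensionNorm (S : Submodule 𝕜 E) (μ : StrongDual 𝕜 E) : ℝ :=
  sInf ((fun σ => ‖σ‖) '' {σ : StrongDual 𝕜 E | Set.EqOn σ μ S})

/-- Hahn–Banach duality. -/
lemma minExtensionNorm_eq_norm_comp_subtypeL (S : Submodule 𝕜 E) (μ : StrongDual 𝕜 E) :
    minExtensionNorm S μ = ‖μ.comp S.subtypeL‖ := by
  refine le_antisymm ?_ (le_csInf ⟨_, μ, fun _ _ => rfl, rfl⟩ ?_)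
  · obtain ⟨g, hg, hnorm⟩ := exists_extension_norm_eq S (μ.comp S.subtypeL)
    rw [← hnorm]
    exact csInf_le ⟨0, by rintro _ ⟨σ, -, rfl⟩; exact norm_nonneg σ⟩
      ⟨g, fun x hx => hg ⟨x, hx⟩, rfl⟩
  · rintro _ ⟨σ, hσ, rfl⟩
    refine (μ.comp S.subtypeL).opNorm_le_bound (norm_nonneg σ) fun x => ?_
    rw [ContinuousLinearMap.comp_apply, Submodule.subtypeL_apply, ← hσ x.2]
    exact σ.le_opNorm x

variable {F : Type*} [SeminormedAddCommGroup F] [NormedSpace 𝕜 F]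

lemma ContinuousLinearMap.norm_mul_norm_le_of_forall {r₁ : StrongDual 𝕜 E}
    {r₂ : StrongDual 𝕜 F} {C : ℝ} (hC : 0 ≤ C)
    (h : ∀ x y, ‖r₁ x‖ * ‖r₂ y‖ ≤ C * ‖x‖ * ‖y‖) : ‖r₁‖ * ‖r₂‖ ≤ C := by
  have h₂ : ∀ x, ‖r₁ x‖ * ‖r₂‖ ≤ C * ‖x‖ := fun x => by
    rw [← norm_smul]
    exact (r₁ x • r₂).opNorm_le_bound (by positivity) fun y => by
      simpa [norm_mul, mul_assoc] using h x y
  have h₁ : ‖(‖r₂‖ : 𝕜) • r₁‖ ≤ C := ContinuousLinearMap.opNorm_le_bound _ hC fun x => by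
    simpa [norm_mul, mul_comm] using h₂ x
  simpa [norm_smul, mul_comm] using h₁

variable {G : Type*} [SeminormedAddCommGroup G] [NormedSpace 𝕜 G]

lemma mul_minExtensionNorm_le_of_bilinear (B : E →ₗ[𝕜] F →ₗ[𝕜] G)
    (hB : ∀ x y, ‖B x y‖ ≤ ‖x‖ * ‖y‖) {S₁ : Submodule 𝕜 E} {S₂ : Submodule 𝕜 F}
    {S : Submodule 𝕜 G} (hS : ∀ x ∈ S₁, ∀ y ∈ S₂, B x y ∈ S) (μ₁ : StrongDual 𝕜 E)
    (μ₂ : StrongDual 𝕜 F) (μ : StrongDual 𝕜 G) (hμ : ∀ x y, μ (B x y) = μ₁ x * μ₂ y) :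
    minExtensionNorm S₁ μ₁ * minExtensionNorm S₂ μ₂ ≤ minExtensionNorm S μ := by
  simp only [minExtensionNorm_eq_norm_comp_subtypeL]
  refine ContinuousLinearMap.norm_mul_norm_le_of_forall (norm_nonneg _) fun x y => ?_
  calc ‖μ₁ x‖ * ‖μ₂ y‖ = ‖μ.comp S.subtypeL ⟨B x y, hS x x.2 y y.2⟩‖ := by
        rw [ContinuousLinearMap.comp_apply, Submodule.subtypeL_apply, hμ, norm_mul]
    _ ≤ ‖μ.comp S.subtypeL‖ * ‖B x y‖ := (μ.comp S.subtypeL).le_opNorm _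
    _ ≤ ‖μ.comp S.subtypeL‖ * ‖x‖ * ‖y‖ := by
        rw [mul_assoc]; exact mul_le_mul_of_nonneg_left (hB x y) (norm_nonneg _)

end Extensions

section Torus

open scoped Pointwise

variable {d d₁ d₂ : ℕ}

lemma isExtrapolation_iff_eqOn_trigPoly {μ σ : TorusMeasure d} {Λ : Finset (Fin d → ℤ)} :
    IsExtrapolation μ Λ σ ↔ Set.EqOn σ μ (trigPoly (-Λ)) := by
  refine ⟨fun h => LinearMap.eqOn_span' ?_, fun h m hm => h ?_⟩
  · rintro _ ⟨m, hm, rfl⟩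
    simpa [mFourierCoeff] using h (-m) (Finset.mem_neg'.mp hm)
  · exact Submodule.subset_span ⟨-m, Finset.neg_mem_neg hm, rfl⟩

lemma minExtNorm_eq_minExtensionNorm (μ : TorusMeasure d) (Λ : Finset (Fin d → ℤ)) :
    minExtNorm μ Λ = minExtensionNorm (trigPoly (-Λ)) μ := by
  simp only [minExtNorm, minExtensionNorm, isExtrapolation_iff_eqOn_trigPoly]

lemma minExtNorm_le_norm {μ σ : TorusMeasure d} {Λ : Finset (Fin d → ℤ)}
    (h : IsExtrapolation μ Λ σ) : minExtNorm μ Λ ≤ ‖σ‖ :=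
  csInf_le ⟨0, by rintro _ ⟨ν, -, rfl⟩; exact norm_nonneg ν⟩ ⟨σ, h, rfl⟩

lemma neg_finAppend (m₁ : Fin d₁ → ℤ) (m₂ : Fin d₂ → ℤ) :
    -Fin.append m₁ m₂ = Fin.append (-m₁) (-m₂) := by
  ext i
  refine Fin.addCases (fun j => ?_) (fun j => ?_) i <;> simp

variable (d₁ d₂) in
def torusFst : C(Torus (d₁ + d₂), Torus d₁) :=
  ⟨fun z j => z (Fin.castAdd d₂ j), by fun_prop⟩

variable (d₁ d₂) in
def torusSnd : C(Torus (d₁ + d₂), Torus d₂) :=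
  ⟨fun z j => z (Fin.natAdd d₁ j), by fun_prop⟩

def torusTensor :
    C(Torus d₁, ℂ) →ₗ[ℂ] C(Torus d₂, ℂ) →ₗ[ℂ] C(Torus (d₁ + d₂), ℂ) :=
  (LinearMap.mul ℂ C(Torus (d₁ + d₂), ℂ)).compl₁₂
    (ContinuousMap.compRightAlgHom ℂ ℂ (torusFst d₁ d₂)).toLinearMap
    (ContinuousMap.compRightAlgHom ℂ ℂ (torusSnd d₁ d₂)).toLinearMap

lemma torusTensor_apply (f₁ : C(Torus d₁, ℂ)) (f₂ : C(Torus d₂, ℂ)) (z : Torus (d₁ + d₂)) :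
    torusTensor f₁ f₂ z = f₁ (torusFst d₁ d₂ z) * f₂ (torusSnd d₁ d₂ z) :=
  rfl

lemma norm_torusTensor_le (f₁ : C(Torus d₁, ℂ)) (f₂ : C(Torus d₂, ℂ)) :
    ‖torusTensor f₁ f₂‖ ≤ ‖f₁‖ * ‖f₂‖ := by
  refine (ContinuousMap.norm_le _ (by positivity)).mpr fun z => ?_
  rw [torusTensor_apply, norm_mul]
  gcongr <;> exact ContinuousMap.norm_coe_le_norm _ _

lemma torusTensor_torusChar (m₁ : Fin d₁ → ℤ) (m₂ : Fin d₂ → ℤ) :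
    torusTensor (torusChar m₁) (torusChar m₂) = torusChar (Fin.append m₁ m₂) := by
  ext z
  simp [torusTensor_apply, torusChar, torusFst, torusSnd, Fin.prod_univ_add]

lemma torusTensor_mem_trigPoly {Λ₁ : Finset (Fin d₁ → ℤ)} {Λ₂ : Finset (Fin d₂ → ℤ)}
    {Λ : Finset (Fin (d₁ + d₂) → ℤ)} (hΛ : ∀ m₁ ∈ Λ₁, ∀ m₂ ∈ Λ₂, Fin.append m₁ m₂ ∈ Λ)
    {f₁ : C(Torus d₁, ℂ)} {f₂ : C(Torus d₂, ℂ)} (hf₁ : f₁ ∈ trigPoly Λ₁)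
    (hf₂ : f₂ ∈ trigPoly Λ₂) : torusTensor f₁ f₂ ∈ trigPoly Λ := by
  have hmem := Submodule.apply_mem_map₂ torusTensor hf₁ hf₂
  rw [trigPoly, trigPoly, Submodule.map₂_span_span] at hmem
  refine Submodule.span_le.mpr ?_ hmem
  rintro _ ⟨_, ⟨m₁, hm₁, rfl⟩, _, ⟨m₂, hm₂, rfl⟩, rfl⟩
  dsimp only
  rw [torusTensor_torusChar]
  exact Submodule.subset_span ⟨_, hΛ m₁ hm₁ m₂ hm₂, rfl⟩

lemma prodM_torusTensor (μ₁ : TorusMeasure d₁) (μ₂ : TorusMeasure d₂)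
    (f₁ : C(Torus d₁, ℂ)) (f₂ : C(Torus d₂, ℂ)) :
    prodM μ₁ μ₂ (torusTensor f₁ f₂) = μ₁ f₁ * μ₂ f₂ := by
  have h : (⟨⇑μ₂, μ₂.continuous⟩ : C(C(Torus d₂, ℂ), ℂ)).comp
      ((torusTensor f₁ f₂).comp (torusAppend d₁ d₂)).curry = μ₂ f₂ • f₁ := by
    ext x
    have hx : ((torusTensor f₁ f₂).comp (torusAppend d₁ d₂)).curry x = f₁ x • f₂ := by
      ext y
      simp [torusTensor_apply, torusAppend, torusFst, torusSnd]
    simp [hx, mul_comm]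
  change μ₁ (ContinuousMap.comp _ _) = _
  rw [h, map_smul, smul_eq_mul, mul_comm]

lemma norm_prodM_le (μ₁ : TorusMeasure d₁) (μ₂ : TorusMeasure d₂) :
    ‖prodM μ₁ μ₂‖ ≤ ‖μ₁‖ * ‖μ₂‖ :=
  LinearMap.mkContinuous_norm_le _ (by positivity) _

lemma mFourierCoeff_prodM (μ₁ : TorusMeasure d₁) (μ₂ : TorusMeasure d₂)
    (m₁ : Fin d₁ → ℤ) (m₂ : Fin d₂ → ℤ) :
    mFourierCoeff (prodM μ₁ μ₂) (Fin.append m₁ m₂) =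
      mFourierCoeff μ₁ m₁ * mFourierCoeff μ₂ m₂ := by
  rw [mFourierCoeff, neg_finAppend, ← torusTensor_torusChar, prodM_torusTensor]
  rfl

lemma IsExtrapolation.prodM {μ₁ ν₁ : TorusMeasure d₁} {μ₂ ν₂ : TorusMeasure d₂}
    {Λ₁ : Finset (Fin d₁ → ℤ)} {Λ₂ : Finset (Fin d₂ → ℤ)}
    (h₁ : IsExtrapolation μ₁ Λ₁ ν₁) (h₂ : IsExtrapolation μ₂ Λ₂ ν₂) :
    IsExtrapolation (prodM μ₁ μ₂) ((Λ₁ ×ˢ Λ₂).image fun q => Fin.append q.1 q.2)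
      (prodM ν₁ ν₂) := by
  simp only [IsExtrapolation, Finset.forall_mem_image, Finset.mem_product, and_imp,
    Prod.forall]
  intro m₁ m₂ hm₁ hm₂
  rw [mFourierCoeff_prodM, mFourierCoeff_prodM, h₁ m₁ hm₁, h₂ m₂ hm₂]

lemma mul_minExtNorm_le_minExtNorm_prodM (μ₁ : TorusMeasure d₁) (μ₂ : TorusMeasure d₂)
    (Λ₁ : Finset (Fin d₁ → ℤ)) (Λ₂ : Finset (Fin d₂ → ℤ)) :
    minExtNorm μ₁ Λ₁ * minExtNorm μ₂ Λ₂ ≤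
      minExtNorm (prodM μ₁ μ₂) ((Λ₁ ×ˢ Λ₂).image fun q => Fin.append q.1 q.2) := by
  simp only [minExtNorm_eq_minExtensionNorm]
  refine mul_minExtensionNorm_le_of_bilinear torusTensor norm_torusTensor_le
    (fun f₁ hf₁ f₂ hf₂ => torusTensor_mem_trigPoly (fun m₁ hm₁ m₂ hm₂ => ?_) hf₁ hf₂)
    μ₁ μ₂ _ (prodM_torusTensor μ₁ μ₂)
  rw [Finset.mem_neg', neg_finAppend]
  exact Finset.mem_image.mpr ⟨(-m₁, -m₂), Finset.mem_product.mpr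
    ⟨Finset.mem_neg'.mp hm₁, Finset.mem_neg'.mp hm₂⟩, rfl⟩

end Torus

/-- **Proposition 2.7(d).** The product of minimal extrapolations is a minimal extrapolation
for the product: `ε(μ₁ × μ₂, Λ₁ × Λ₂) = ε(μ₁,Λ₁) ε(μ₂,Λ₂)`, and
`ν₁ × ν₂ ∈ 𝓔(μ₁ × μ₂, Λ₁ × Λ₂)` whenever `ν_j ∈ 𝓔(μ_j, Λ_j)`. -/
theorem minimalExtrapolation_prod {d₁ d₂ : ℕ} (μ₁ : TorusMeasure d₁)
    (μ₂ : TorusMeasure d₂) (Λ₁ : Finset (Fin d₁ → ℤ)) (Λ₂ : Finset (Fin d₂ → ℤ))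
    (ν₁ : TorusMeasure d₁) (ν₂ : TorusMeasure d₂)
    (h₁ : IsMinimalExtrapolation μ₁ Λ₁ ν₁) (h₂ : IsMinimalExtrapolation μ₂ Λ₂ ν₂) :
    minExtNorm (prodM μ₁ μ₂) ((Λ₁ ×ˢ Λ₂).image fun q => Fin.append q.1 q.2) =
      minExtNorm μ₁ Λ₁ * minExtNorm μ₂ Λ₂ ∧
    IsMinimalExtrapolation (prodM μ₁ μ₂)
      ((Λ₁ ×ˢ Λ₂).image fun q => Fin.append q.1 q.2) (prodM ν₁ ν₂) := by
  have hext := h₁.1.prodM h₂.1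
  have hlower := mul_minExtNorm_le_minExtNorm_prodM μ₁ μ₂ Λ₁ Λ₂
  have hupper : ‖prodM ν₁ ν₂‖ ≤ minExtNorm μ₁ Λ₁ * minExtNorm μ₂ Λ₂ := by
    simpa only [h₁.2, h₂.2] using norm_prodM_le ν₁ ν₂
  have hmin := minExtNorm_le_norm hext
  exact ⟨by linarith, hext, by linarith⟩

end
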